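/- Let N be a strongly tree-child leaf-labeled network, and uv, st edges in the same root component T of N such that the (unique) undirected tree path in T from u to t contains v and s (in that order, possibly with uv = st). Then: (1) μ_d(u, v) ≥ μ_d(s, t) coordinatewise; (2) μ_d(v, u) is incomparable to μ_d(s, t); (3) μ_d(u, v) is incomparable to μ_d(t, s). -/

import Mathlib

open Relation

/-- A semidirected graph: a set of undirected edges and a set of directed edges. -/
structure SDG (V : Type) where
  undir : Finset (Sym2 V)
  dir : Finset (V × V)

namespace SDG

variable {V : Type} [DecidableEq V]

/-- one step along a directed edge -/
def dstep (N : SDG V) (u v : V) : Prop := (u, v) ∈ N.dir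

/-- one step along an undirected edge -/
def ustep (N : SDG V) (u v : V) : Prop := s(u, v) ∈ N.undir

/-- one step of a semidirected path -/
def sstep (N : SDG V) (u v : V) : Prop := N.dstep u v ∨ N.ustep u v

/-- directed reachability (existence of a directed path) -/
def dreach (N : SDG V) : V → V → Prop := ReflTransGen N.dstep

/-- reachability using undirected edges only -/
def ureach (N : SDG V) : V → V → Prop := ReflTransGen N.ustep

/-- semidirected reachability (existence of a semidirected path) -/
def sreach (N : SDG V) : V → V → Prop := ReflTransGen N.sstep

/-- `M` is obtained from `N` by directing some of the undirected edges of `N`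
(each such edge receiving exactly one direction). -/
def Directs (N M : SDG V) : Prop :=
  M.undir ⊆ N.undir ∧ N.dir ⊆ M.dir ∧
    (∀ e ∈ M.dir, e ∉ N.dir → s(e.1, e.2) ∈ N.undir ∧ s(e.1, e.2) ∉ M.undir) ∧
    (∀ p ∈ N.undir, p ∉ M.undir →
      ∃! e : V × V, e ∈ M.dir ∧ e ∉ N.dir ∧ s(e.1, e.2) = p)

/-- a semidirected graph is directed when it has no undirected edges -/
def IsDirected (N : SDG V) : Prop := N.undir = ∅

/-- existence of a directed cycle -/
def HasDirCycle (N : SDG V) : Prop := ∃ e ∈ N.dir, N.dreach e.2 e.1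

/-- `N` is acyclic if no compatible directed graph (obtained by directing all
undirected edges) has a directed cycle. -/
def Acyclic (N : SDG V) : Prop :=
  ∀ G : SDG V, Directs N G → G.IsDirected → ¬ G.HasDirCycle

/-- in-degree: number of incoming directed edges -/
def ideg (N : SDG V) (v : V) : ℕ := (N.dir.filter fun e => e.2 = v).card

/-- out-degree: number of outgoing directed edges -/
def odeg (N : SDG V) (v : V) : ℕ := (N.dir.filter fun e => e.1 = v).card

/-- number of incident undirected edges -/
def udeg (N : SDG V) (v : V) : ℕ := (N.undir.filter fun p => v ∈ p).card

/-- total degree -/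
def deg (N : SDG V) (v : V) : ℕ := N.ideg v + N.odeg v + N.udeg v

/-- hybrid edges: directed edges whose child is a hybrid node (in-degree ≥ 2) -/
def hybridEdges (N : SDG V) : Finset (V × V) := N.dir.filter fun e => 2 ≤ N.ideg e.2

/-- no self-loops, and no undirected edge parallel to a directed edge -/
def Proper (N : SDG V) : Prop :=
  (∀ p ∈ N.undir, ¬ p.IsDiag) ∧ (∀ e ∈ N.dir, e.1 ≠ e.2) ∧
    ∀ e ∈ N.dir, s(e.1, e.2) ∉ N.undir

/-- `M` is phylogenetically compatible with `N`: `M` is an SDAG obtained from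
`N` by directing some undirected edges, keeping the same hybrid edges. -/
def PhyloCompat (M N : SDG V) : Prop :=
  Directs N M ∧ M.Acyclic ∧ M.hybridEdges = N.hybridEdges

/-- a rooted partner of `N`: a DAG phylogenetically compatible with `N` -/
def RootedPartner (G N : SDG V) : Prop := PhyloCompat G N ∧ G.IsDirected

/-- a network: an SDAG admitting a rooted partner -/
def IsNetwork (N : SDG V) : Prop := N.Acyclic ∧ ∃ G : SDG V, RootedPartner G N

/-- mutual semidirected reachability (same undirected component) -/
def sim (N : SDG V) (u v : V) : Prop := N.sreach u v ∧ N.sreach v u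

/-- `v` lies in a root component: its undirected component is maximal for the
semidirected-path preorder -/
def InRootComp (N : SDG V) (v : V) : Prop := ∀ u, N.sreach u v → N.sreach v u

/-- the undirected simple graph induced by the undirected edges -/
def undirGraph (N : SDG V) : SimpleGraph V :=
  SimpleGraph.fromEdgeSet (N.undir : Set (Sym2 V))

/-- leaf in some rooted partner -/
def IsUnrootedLeaf (N : SDG V) (v : V) : Prop :=
  ∃ G : SDG V, RootedPartner G N ∧ G.odeg v = 0

/-- leaf in every rooted partner -/
def IsRootedLeaf (N : SDG V) (v : V) : Prop :=
  ∀ G : SDG V, RootedPartner G N → G.odeg v = 0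

/-- a leaf-labeled network: a network whose unrooted leaves are all rooted leaves
(so that its leaf set is stable across rooted partners and can be labeled) -/
def LNetwork (N : SDG V) : Prop :=
  IsNetwork N ∧ ∀ v, IsUnrootedLeaf N v → IsRootedLeaf N v

/-- `l` is (the list of nodes of) a directed path from `u` to `v` in `G` -/
def IsDPathList (G : SDG V) (u v : V) (l : List V) : Prop :=
  l.head? = some u ∧ l.getLast? = some v ∧ l.Chain' G.dstep

/-- the number of directed paths from `u` to `v` -/
noncomputable def pathCount (G : SDG V) (u v : V) : ℕ :=
  Set.ncard {l : List V | IsDPathList G u v l}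

/-- the set of directed paths starting at `v` -/
def startPaths (G : SDG V) (v : V) : Set (List V) :=
  {l : List V | l.head? = some v ∧ l.Chain' G.dstep}

/-- a root choice function: picks one node in each root component, constant on
root components, and the identity outside of root components -/
def RootChoice (N : SDG V) (ρ : V → V) : Prop :=
  (∀ v, InRootComp N v → sim N v (ρ v) ∧ ∀ u, InRootComp N u → sim N u v → ρ u = ρ v) ∧
    ∀ v, ¬ InRootComp N v → ρ v = v

/-- `G` is the rooted partner of `N` whose set of roots (in-degree 0 nodes) is the
image of the root choice function `ρ` -/
def PartnerFor (N : SDG V) (ρ : V → V) (G : SDG V) : Prop :=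
  RootedPartner G N ∧ {v | G.ideg v = 0} = ρ '' {v | InRootComp N v}

-- the directional μ-vector of `(u, v)`: path counts from `v` to each node in any
-- rooted partner directing the edge `uv` as `(u, v)`
open Classical in
noncomputable def muD (N : SDG V) (u v : V) : V → ℕ :=
  if h : ∃ G : SDG V, RootedPartner G N ∧ (u, v) ∈ G.dir then
    fun x => pathCount h.choose v x
  else fun _ => 0

-- the root μ-vector of the root component of `t`
open Classical in
noncomputable def muR (N : SDG V) (t : V) : V → ℕ :=
  if h : ∃ p : (V → V) × SDG V, RootChoice N p.1 ∧ PartnerFor N p.1 p.2 then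
    fun x => pathCount h.choose.2 (h.choose.1 t) x
  else fun _ => 0

/-- a DAG is tree-child if every non-leaf node has a tree-node child -/
def TreeChildDAG (G : SDG V) : Prop :=
  ∀ v, 0 < G.odeg v → ∃ w, (v, w) ∈ G.dir ∧ G.ideg w ≤ 1

/-- all rooted partners are tree-child -/
def StronglyTreeChild (N : SDG V) : Prop :=
  ∀ G : SDG V, RootedPartner G N → TreeChildDAG G

/-- some rooted partner is tree-child -/
def WeaklyTreeChild (N : SDG V) : Prop :=
  ∃ G : SDG V, RootedPartner G N ∧ TreeChildDAG G

/-- coordinatewise comparison of μ-vectors over the leaves of `N` -/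
def muLE (N : SDG V) (m m' : V → ℕ) : Prop :=
  ∀ x, IsUnrootedLeaf N x → m x ≤ m' x

/-- incomparability of μ-vectors (over the leaves of `N`) -/
def muIncomp (N : SDG V) (m m' : V → ℕ) : Prop :=
  ¬ muLE N m m' ∧ ¬ muLE N m' m

/-- a network is complete when every undirected edge lies in a root component
(equivalently, it equals its completion) -/
def Complete (N : SDG V) : Prop := ∀ p ∈ N.undir, ∀ v ∈ p, InRootComp N v

/-- reachability by a tree path (directed path whose edges are all tree edges) -/
def treeReach (G : SDG V) : V → V → Prop :=
  ReflTransGen fun a b => (a, b) ∈ G.dir ∧ G.ideg b ≤ 1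

/-- `v` has a tree descendant leaf -/
def HasTreeDescLeaf (G : SDG V) (v : V) : Prop := ∃ x, G.odeg x = 0 ∧ treeReach G v x

/-- `l` is an elementary path from `u` to `v`: a directed path whose first node
has out-degree 1 and whose intermediate nodes have in- and out-degree 1 -/
def IsElemPathList (G : SDG V) (u v : V) (l : List V) : Prop :=
  l.head? = some u ∧ l.getLast? = some v ∧ l.Chain' G.dstep ∧ 2 ≤ l.length ∧
    G.odeg u = 1 ∧ ∀ w ∈ (l.drop 1).dropLast, G.ideg w = 1 ∧ G.odeg w = 1

/-- an elementary node: a tree node with out-degree = total degree = 1, or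
out-degree < total degree = 2 -/
def IsElemNode (G : SDG V) (v : V) : Prop :=
  G.ideg v ≤ 1 ∧ ((G.odeg v = 1 ∧ G.deg v = 1) ∨ (G.odeg v < G.deg v ∧ G.deg v = 2))

/-- the setoid identifying nodes connected by undirected edges -/
def usetoid (N : SDG V) : Setoid V :=
  ⟨Relation.EqvGen N.ustep, Relation.EqvGen.is_equivalence _⟩

/-- the edge relation of the contraction of `N`: the directed graph on the
quotient by undirected connectivity, with the directed edges of `N` -/
def crel (N : SDG V) (x y : Quotient N.usetoid) : Prop :=
  ∃ u v : V, (u, v) ∈ N.dir ∧ Quotient.mk N.usetoid u = x ∧ Quotient.mk N.usetoid v = y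

/-! ### Auxiliary lemmas -/
set_option linter.unusedSectionVars false
set_option maxHeartbeats 1000000

section Aux

variable {V : Type} [DecidableEq V] {N G A B : SDG V}

lemma ustep_symm (h : N.ustep a b) : N.ustep b a := by
  unfold ustep at *; rwa [Sym2.eq_swap]

lemma undir_ne (hP : N.Proper) (h : s(a, b) ∈ N.undir) : a ≠ b := by
  intro rfl
  exact hP.1 _ h (Sym2.mk_isDiag_iff.2 rfl)

lemma undir_not_dir (hP : N.Proper) (h : s(a, b) ∈ N.undir) : (a, b) ∉ N.dir := by
  intro hd
  exact hP.2.2 _ hd h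

lemma partner_undir (hG : RootedPartner G N) : G.undir = ∅ := hG.2

lemma partner_dir_sub (hG : RootedPartner G N) : N.dir ⊆ G.dir := hG.1.1.2.1

lemma partner_new_undir (hG : RootedPartner G N) (h : e ∈ G.dir) (h' : e ∉ N.dir) :
    s(e.1, e.2) ∈ N.undir := (hG.1.1.2.2.1 e h h').1

lemma directs_self (G : SDG V) : Directs G G :=
  ⟨le_refl _, le_refl _, fun e he hne => absurd he hne,
    fun p hp hp2 => absurd hp hp2⟩

lemma partner_no_cycle (hG : RootedPartner G N) : ¬ G.HasDirCycle :=
  hG.1.2.1 G (directs_self G) hG.2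

lemma partner_hybrid (hG : RootedPartner G N) : G.hybridEdges = N.hybridEdges := hG.1.2.2

lemma partner_orient (hG : RootedPartner G N) (hp : p ∈ N.undir) :
    ∃! e : V × V, e ∈ G.dir ∧ e ∉ N.dir ∧ s(e.1, e.2) = p := by
  refine hG.1.1.2.2.2 p hp ?_
  rw [partner_undir hG]; exact Finset.notMem_empty _

lemma partner_orient_cases (hP : N.Proper) (hG : RootedPartner G N) (hp : s(a, b) ∈ N.undir) :
    (a, b) ∈ G.dir ∨ (b, a) ∈ G.dir := by
  obtain ⟨e, ⟨he1, he2, he3⟩, -⟩ := partner_orient hG hp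
  rcases Sym2.eq_iff.1 he3 with ⟨h1, h2⟩ | ⟨h1, h2⟩
  · left; have : e = (a, b) := Prod.ext h1 h2; rwa [this] at he1
  · right; have : e = (b, a) := Prod.ext h1 h2; rwa [this] at he1

lemma partner_orient_unique (hP : N.Proper) (hG : RootedPartner G N) (hp : s(a, b) ∈ N.undir)
    (h1 : (a, b) ∈ G.dir) : (b, a) ∉ G.dir := by
  intro h2
  obtain ⟨e, -, hu⟩ := partner_orient hG hp
  have e1 := hu (a, b) ⟨h1, undir_not_dir hP hp, rfl⟩
  have e2 := hu (b, a) ⟨h2, undir_not_dir hP (by rwa [Sym2.eq_swap] at hp), Sym2.eq_swap.symm ▸ rfl⟩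
  have hab : (a, b) = ((b, a) : V × V) := e1.trans e2.symm
  exact undir_ne hP hp (congrArg Prod.fst hab)

/-- hybrid edges are directed edges of `N` -/
lemma hybridEdges_sub (N : SDG V) : N.hybridEdges ⊆ N.dir := Finset.filter_subset _ _

/-- key: a newly directed edge in a rooted partner has head of in-degree exactly 1 -/
lemma new_ideg_one (hG : RootedPartner G N) (h : (a, b) ∈ G.dir) (h' : (a, b) ∉ N.dir) :
    G.ideg b = 1 := by
  have hmem : (a, b) ∈ G.dir.filter (fun e => e.2 = b) := Finset.mem_filter.2 ⟨h, rfl⟩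
  have hpos : 0 < G.ideg b := Finset.card_pos.2 ⟨_, hmem⟩
  rcases Nat.lt_or_ge (G.ideg b) 2 with hlt | hge
  · omega
  · exfalso
    have : (a, b) ∈ G.hybridEdges := Finset.mem_filter.2 ⟨h, hge⟩
    rw [partner_hybrid hG] at this
    exact h' (hybridEdges_sub N this)

/-- if a node has in-degree ≤ 1, its in-edge is unique -/
lemma in_edge_unique (h : G.ideg b ≤ 1) (h1 : e ∈ G.dir) (h2 : e.2 = b)
    (h3 : e' ∈ G.dir) (h4 : e'.2 = b) : e = e' := by
  by_contra hne
  have : ({e, e'} : Finset (V × V)) ⊆ G.dir.filter (fun x => x.2 = b) := by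
    intro x hx
    rcases Finset.mem_insert.1 hx with rfl | hx
    · exact Finset.mem_filter.2 ⟨h1, h2⟩
    · rw [Finset.mem_singleton.1 hx]; exact Finset.mem_filter.2 ⟨h3, h4⟩
  have := Finset.card_le_card this
  rw [Finset.card_insert_of_notMem (by simpa using hne), Finset.card_singleton] at this
  unfold ideg at h
  omega

lemma cycle_of_edge_dreach (h : (x, y) ∈ G.dir) (h' : G.dreach y x) : G.HasDirCycle :=
  ⟨(x, y), h, h'⟩

lemma dreach_antisymm (hG : ¬ G.HasDirCycle) (h : G.dreach a b) (h' : G.dreach b a) : a = b := by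
  rcases (Relation.ReflTransGen.cases_head h) with rfl | ⟨c, hc, hcb⟩
  · rfl
  · exact absurd (cycle_of_edge_dreach hc (hcb.trans h')) hG

end Aux

section Lists
set_option linter.unusedSectionVars false
set_option linter.unusedVariables false
set_option maxHeartbeats 1000000

variable {V : Type} [DecidableEq V] {N G : SDG V} {r : V → V → Prop} {a b : V}

lemma chain_rtg : ∀ (l : List V), l.Chain' r → l.head? = some a → l.getLast? = some b →
    Relation.ReflTransGen r a b := by
  intro l
  induction l generalizing a with
  | nil => intro _ h; simp at h
  | cons x t ih =>
    intro hc hh hl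
    simp at hh; subst hh
    cases t with
    | nil => simp at hl; subst hl; exact Relation.ReflTransGen.refl
    | cons y t' =>
      have hc' := List.isChain_cons_cons.1 hc
      have : Relation.ReflTransGen r y b := by
        apply ih hc'.2 rfl
        simpa using hl
      exact Relation.ReflTransGen.head hc'.1 this

lemma rtg_chain (h : Relation.ReflTransGen r a b) :
    ∃ l : List V, l.head? = some a ∧ l.getLast? = some b ∧ l.Chain' r := by
  induction h with
  | refl => exact ⟨[a], rfl, rfl, List.isChain_singleton _⟩
  | @tail c d hac hcd ih =>
    obtain ⟨l, h1, h2, h3⟩ := ih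
    refine ⟨l ++ [d], ?_, by simp, ?_⟩
    · cases l with
      | nil => simp at h1
      | cons x t => simpa using h1
    · rw [List.Chain', List.isChain_append]
      refine ⟨h3, List.isChain_singleton _, ?_⟩
      intro x hx y hy
      simp at hy; subst hy
      rw [h2] at hx; simp at hx; subst hx; exact hcd

lemma exists_dup_split {l : List V} (h : ¬ l.Nodup) :
    ∃ (x : V) (l₁ l₂ l₃ : List V), l = l₁ ++ x :: l₂ ++ x :: l₃ := by
  induction l with
  | nil => simp at h
  | cons a t ih =>
    by_cases ha : a ∈ t
    · obtain ⟨s, t₂, rfl⟩ := List.append_of_mem ha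
      exact ⟨a, [], s, t₂, by simp⟩
    · have : ¬ t.Nodup := by
        intro hn; exact h (List.nodup_cons.2 ⟨ha, hn⟩)
      obtain ⟨x, l₁, l₂, l₃, rfl⟩ := ih this
      exact ⟨x, a :: l₁, l₂, l₃, by simp⟩

lemma chain_dup_cycle {l : List V} (hc : l.Chain' G.dstep) (h : ¬ l.Nodup) :
    G.HasDirCycle := by
  obtain ⟨x, l₁, l₂, l₃, rfl⟩ := exists_dup_split h
  have h2 : (x :: l₂ ++ [x]).Chain' G.dstep := by
    refine hc.infix ⟨l₁, l₃, by simp⟩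
  rw [List.cons_append, List.Chain', List.isChain_cons] at h2
  obtain ⟨hstep, hrest⟩ := h2
  cases hy : (l₂ ++ [x]).head? with
  | none => simp at hy
  | some y =>
    have hxy : G.dstep x y := hstep y hy
    have : Relation.ReflTransGen G.dstep y x := by
      apply chain_rtg _ hrest hy
      simp
    exact ⟨(x, y), hxy, this⟩

lemma chain_shrink : ∀ (n : ℕ) (l : List V), l.length ≤ n → l.Chain' r →
    l.head? = some a → l.getLast? = some b →
    ∃ m : List V, m.head? = some a ∧ m.getLast? = some b ∧ m.Chain' r ∧ m.Nodup := by
  intro n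
  induction n with
  | zero => intro l hl _ hh _; cases l <;> simp_all
  | succ n ih =>
    intro l hl hc hh hlast
    by_cases hnd : l.Nodup
    · exact ⟨l, hh, hlast, hc, hnd⟩
    · obtain ⟨x, l₁, l₂, l₃, rfl⟩ := exists_dup_split hnd
      rw [List.Chain', List.isChain_append] at hc
      obtain ⟨hcl, hcr, hlink⟩ := hc
      rw [List.isChain_append] at hcl
      apply ih (l₁ ++ x :: l₃)
      · have : ((l₁ ++ x :: l₂) ++ x :: l₃).length ≤ n + 1 := hl
        simp at this ⊢
        omega
      · rw [List.Chain', List.isChain_append]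
        exact ⟨hcl.1, hcr, fun y hy z hz => hcl.2.2 y hy z hz⟩
      · cases l₁ with
        | nil => simpa using hh
        | cons c t => simpa using hh
      · rw [List.getLast?_append_cons] at hlast ⊢
        exact hlast

lemma rtg_nodup_chain (h : Relation.ReflTransGen r a b) :
    ∃ l : List V, l.head? = some a ∧ l.getLast? = some b ∧ l.Chain' r ∧ l.Nodup := by
  obtain ⟨l, h1, h2, h3⟩ := rtg_chain h
  exact chain_shrink l.length l le_rfl h3 h1 h2

end Lists

section Counts
set_option linter.unusedSectionVars false
set_option linter.unusedVariables false
set_option maxHeartbeats 1000000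

variable {V : Type} [DecidableEq V] {N G : SDG V} {a b c : V}

lemma finite_bounded_lists (S : Finset V) :
    ∀ n : ℕ, {l : List V | l.length ≤ n ∧ ∀ x ∈ l, x ∈ S}.Finite := by
  intro n
  induction n with
  | zero =>
    apply Set.Finite.subset (Set.finite_singleton ([] : List V))
    rintro l ⟨h1, -⟩
    simp at h1 ⊢
    exact h1
  | succ n ih =>
    apply Set.Finite.subset
      ((Set.finite_singleton ([] : List V)).union
        (Set.Finite.image2 (fun x l => x :: l) S.finite_toSet ih))
    rintro l ⟨h1, h2⟩
    cases l with
    | nil => exact Or.inl rfl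
    | cons x t =>
      refine Or.inr (Set.mem_image2.2 ⟨x, by simpa using h2 x (by simp), t, ?_, rfl⟩)
      refine ⟨by simp at h1; omega, fun y hy => h2 y (by simp [hy])⟩

lemma nodup_length_le {l : List V} {S : Finset V} (hnd : l.Nodup) (h : ∀ x ∈ l, x ∈ S) :
    l.length ≤ S.card := by
  rw [← List.toFinset_card_of_nodup hnd]
  apply Finset.card_le_card
  intro x hx
  exact h x (List.mem_toFinset.1 hx)

lemma chain_mem_support {l : List V} (hc : l.Chain' G.dstep) (hh : l.head? = some a) :
    ∀ x ∈ l, x ∈ insert a (G.dir.image Prod.snd) := by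
  induction l generalizing a with
  | nil => simp
  | cons y t ih =>
    simp at hh; subst hh
    intro x hx
    rcases List.mem_cons.1 hx with rfl | hx
    · exact Finset.mem_insert_self _ _
    · cases t with
      | nil => simp at hx
      | cons z t' =>
        have hc' := List.isChain_cons_cons.1 hc
        have := ih hc'.2 rfl x hx
        rcases Finset.mem_insert.1 this with rfl | hmem
        · exact Finset.mem_insert_of_mem
            (Finset.mem_image.2 ⟨(y, x), hc'.1, rfl⟩)
        · exact Finset.mem_insert_of_mem hmem

lemma paths_finite (hG : ¬ G.HasDirCycle) (a b : V) :
    {l : List V | IsDPathList G a b l}.Finite := by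
  set S := insert a (G.dir.image Prod.snd) with hS
  apply Set.Finite.subset (finite_bounded_lists S S.card)
  rintro l ⟨h1, h2, h3⟩
  have hnd : l.Nodup := by
    by_contra hnd
    exact hG (chain_dup_cycle h3 hnd)
  have hmem := chain_mem_support h3 h1
  exact ⟨nodup_length_le hnd hmem, hmem⟩

lemma pathCount_pos (hG : ¬ G.HasDirCycle) :
    0 < pathCount G a b ↔ G.dreach a b := by
  unfold pathCount
  rw [Set.ncard_pos (paths_finite hG a b)]
  constructor
  · rintro ⟨l, h1, h2, h3⟩
    exact chain_rtg l h3 h1 h2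
  · intro h
    obtain ⟨l, h1, h2, h3⟩ := rtg_chain h
    exact ⟨l, h1, h2, h3⟩

lemma pathCount_eq_zero (hG : ¬ G.HasDirCycle) (h : ¬ G.dreach a b) :
    pathCount G a b = 0 := by
  have := (pathCount_pos (a := a) (b := b) hG).not.2 h
  omega

lemma pathCount_le_of_dreach (hG : ¬ G.HasDirCycle) (h : G.dreach c a) :
    pathCount G a b ≤ pathCount G c b := by
  obtain ⟨P, hP1, hP2, hP3⟩ := rtg_chain h
  rcases P with - | ⟨x, t⟩
  · simp at hP1
  rcases t with - | ⟨y, t'⟩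
  · -- single node path: c = a
    have h1 : x = c := by simpa using hP1
    have h2 : x = a := by simpa using hP2
    rw [h1.symm.trans h2]
  · -- P has length ≥ 2
    have hxc : x = c := by simpa using hP1
    subst hxc
    set P : List V := x :: y :: t' with hPdef
    have hPne : P ≠ [] := by simp [hPdef]
    have hlastP : P.getLast hPne = a := by
      have := List.getLast?_eq_getLast hPne
      rw [hP2] at this
      exact (Option.some_inj.1 this).symm
    have hPsplit : P.dropLast ++ [a] = P := by
      rw [← hlastP]
      exact List.dropLast_append_getLast hPne
    have hdl_ne : P.dropLast ≠ [] := by simp [hPdef]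
    have hdl_head : P.dropLast.head? = some x := by
      cases hdl : P.dropLast with
      | nil => exact absurd hdl hdl_ne
      | cons w s =>
        have : P.head? = some w := by
          conv_lhs => rw [← hPsplit]
          rw [hdl]; simp
        simp [hPdef] at this
        simp [this.symm]
    have hinj : Function.Injective (fun m : List V => P.dropLast ++ m) := by
      intro m1 m2 hm
      exact List.append_cancel_left hm
    have himage : (fun m : List V => P.dropLast ++ m) ''
        {m | IsDPathList G a b m} ⊆ {m | IsDPathList G x b m} := by
      rintro - ⟨m, ⟨hm1, hm2, hm3⟩, rfl⟩
      have hmne : m ≠ [] := by rintro rfl; simp at hm1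
      show IsDPathList G x b (P.dropLast ++ m)
      refine ⟨?_, ?_, ?_⟩
      · cases hdl : P.dropLast with
        | nil => exact absurd hdl hdl_ne
        | cons w s =>
          rw [hdl] at hdl_head
          simp at hdl_head ⊢
          exact hdl_head
      · rw [List.getLast?_append_of_ne_nil _ hmne]
        exact hm2
      · rw [List.Chain', List.isChain_append]
        refine ⟨hP3.prefix ⟨[a], hPsplit⟩, hm3, ?_⟩
        intro z hz w hw
        rw [hm1] at hw
        simp at hw; subst hw
        -- link: last of dropLast steps to a
        have := hP3
        conv at this => rw [← hPsplit]
        rw [List.Chain', List.isChain_append] at this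
        exact this.2.2 z hz a (by simp)
    calc pathCount G a b
        = ((fun m : List V => P.dropLast ++ m) '' {m | IsDPathList G a b m}).ncard := by
          unfold pathCount
          rw [Set.ncard_image_of_injective _ hinj]
      _ ≤ pathCount G x b := Set.ncard_le_ncard himage (paths_finite hG x b)

end Counts

section Zip
set_option linter.unusedSectionVars false
set_option linter.unusedVariables false
set_option maxHeartbeats 1000000

variable {V : Type} [DecidableEq V] {N G : SDG V} {r : V → V → Prop} {a b : V} {m : List V}

lemma mem_zip_tail (h : (a, b) ∈ m.zip m.tail) :
    ∃ (i : ℕ) (h1 : i < m.length) (h2 : i + 1 < m.length),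
      m.get ⟨i, h1⟩ = a ∧ m.get ⟨i + 1, h2⟩ = b := by
  obtain ⟨⟨i, hi⟩, hget⟩ := List.mem_iff_get.1 h
  have hlen : (m.zip m.tail).length = min m.length m.tail.length := List.length_zip
  have hti : m.tail.length = m.length - 1 := List.length_tail
  have h2 : i + 1 < m.length := by
    rw [hlen, hti] at hi; omega
  have h1 : i < m.length := by omega
  refine ⟨i, h1, h2, ?_, ?_⟩
  · have := List.getElem_zip (l := m) (l' := m.tail) (i := i) (h := hi)
    rw [List.get_eq_getElem] at hget ⊢
    rw [this] at hget
    exact congrArg Prod.fst hget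
  · have := List.getElem_zip (l := m) (l' := m.tail) (i := i) (h := hi)
    rw [List.get_eq_getElem] at hget ⊢
    rw [this] at hget
    have := congrArg Prod.snd hget
    simp at this
    simpa using this

lemma zip_tail_mem {i : ℕ} (h2 : i + 1 < m.length) :
    (m.get ⟨i, by omega⟩, m.get ⟨i + 1, h2⟩) ∈ m.zip m.tail := by
  have hti : m.tail.length = m.length - 1 := List.length_tail
  have hi : i < (m.zip m.tail).length := by
    rw [List.length_zip, hti]; omega
  apply List.mem_iff_get.2 ⟨⟨i, hi⟩, ?_⟩
  rw [List.get_eq_getElem, List.getElem_zip]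
  rw [List.get_eq_getElem, List.get_eq_getElem]
  congr 1
  rw [List.getElem_tail]

lemma chain'_zip_mem (hc : m.Chain' r) (h : (a, b) ∈ m.zip m.tail) : r a b := by
  obtain ⟨i, h1, h2, ha, hb⟩ := mem_zip_tail h
  subst ha; subst hb
  have := List.isChain_iff_getElem.1 hc i (by omega)
  convert this using 2 <;> simp

lemma chain'_of_zip (h : ∀ x y, (x, y) ∈ m.zip m.tail → r x y) : m.Chain' r := by
  rw [List.Chain', List.isChain_iff_getElem]
  intro i hi
  exact h _ _ (zip_tail_mem (by omega))

lemma zip_tail_nodup (hnd : m.Nodup) (h : (a, b) ∈ m.zip m.tail)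
    (h' : (b, a) ∈ m.zip m.tail) : False := by
  obtain ⟨i, hi1, hi2, hia, hib⟩ := mem_zip_tail h
  obtain ⟨j, hj1, hj2, hjb, hja⟩ := mem_zip_tail h'
  have hinj := List.nodup_iff_injective_get.1 hnd
  have e1 : i = j + 1 := by
    have : m.get ⟨i, hi1⟩ = m.get ⟨j + 1, hj2⟩ := by rw [hia, hja]
    have := hinj this
    simpa using this
  have e2 : i + 1 = j := by
    have : m.get ⟨i + 1, hi2⟩ = m.get ⟨j, hj1⟩ := by rw [hib, hjb]
    have := hinj this
    simpa using this
  omega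

end Zip

section Flip
set_option linter.unusedSectionVars false
set_option linter.unusedVariables false
set_option maxHeartbeats 1000000

variable {V : Type} [DecidableEq V] {N G : SDG V} {a b : V}

/-- flip a set of directed edges -/
def flip (G : SDG V) (S : Finset (V × V)) : SDG V :=
  ⟨∅, (G.dir \ S) ∪ S.image Prod.swap⟩

lemma flip_isDirected (G : SDG V) (S : Finset (V × V)) : (flip G S).IsDirected := rfl

lemma mem_flip {S : Finset (V × V)} :
    (a, b) ∈ (flip G S).dir ↔ ((a, b) ∈ G.dir ∧ (a, b) ∉ S) ∨ (b, a) ∈ S := by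
  unfold flip
  simp only [Finset.mem_union, Finset.mem_sdiff, Finset.mem_image]
  constructor
  · rintro (h | ⟨f, hf, hswap⟩)
    · exact Or.inl h
    · right
      have : f = (b, a) := by
        have : f.swap = (a, b) := hswap
        have := congrArg Prod.swap this
        simpa using this
      rwa [this] at hf
  · rintro (h | h)
    · exact Or.inl h
    · exact Or.inr ⟨(b, a), h, rfl⟩

lemma flip_directs (hP : N.Proper) (hG : RootedPartner G N) {S : Finset (V × V)}
    (hS : S ⊆ G.dir) (hSnew : ∀ e ∈ S, e ∉ N.dir) : Directs N (flip G S) := by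
  refine ⟨?_, ?_, ?_, ?_⟩
  · intro x hx; simp [flip] at hx
  · intro e he
    unfold flip
    apply Finset.mem_union_left
    exact Finset.mem_sdiff.2 ⟨partner_dir_sub hG he, fun hc => hSnew e hc he⟩
  · rintro ⟨x, y⟩ he hne
    refine ⟨?_, by simp [flip]⟩
    rcases mem_flip.1 he with ⟨h1, -⟩ | h1
    · exact partner_new_undir hG h1 hne
    · have := partner_new_undir hG (hS h1) (hSnew _ h1)
      simpa [Sym2.eq_swap] using this
  · intro p hp hp'
    obtain ⟨e0, ⟨he0G, he0N, he0s⟩, hu0⟩ := partner_orient hG hp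
    have hswap_undir : s(e0.swap.1, e0.swap.2) ∈ N.undir := by
      have : s(e0.swap.1, e0.swap.2) = s(e0.1, e0.2) := by
        simp [Sym2.eq_swap]
      rw [this, he0s]; exact hp
    have hswapN : e0.swap ∉ N.dir := by
      intro hc
      exact hP.2.2 _ hc hswap_undir
    by_cases hmem : e0 ∈ S
    · refine ⟨e0.swap, ⟨?_, hswapN, ?_⟩, ?_⟩
      · show (e0.2, e0.1) ∈ (flip G S).dir
        exact mem_flip.2 (Or.inr (by simpa using hmem))
      · show s(e0.swap.1, e0.swap.2) = p
        rw [show s(e0.swap.1, e0.swap.2) = s(e0.1, e0.2) by simp [Sym2.eq_swap], he0s]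
      · rintro ⟨x, y⟩ ⟨h1, h2, h3⟩
        rcases mem_flip.1 h1 with ⟨hG1, hS1⟩ | hS1
        · have := hu0 (x, y) ⟨hG1, h2, h3⟩
          rw [this] at hS1
          exact absurd hmem hS1
        · have hy : (y, x) ∈ G.dir := hS hS1
          have hyN : (y, x) ∉ N.dir := hSnew _ hS1
          have h3' : s((y, x).1, (y, x).2) = p := by
            simp only []
            rw [show s(y, x) = s(x, y) from Sym2.eq_swap]
            exact h3
          have := hu0 (y, x) ⟨hy, hyN, h3'⟩
          rw [← this]
          rfl
    · refine ⟨e0, ⟨?_, he0N, he0s⟩, ?_⟩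
      · show e0 ∈ (flip G S).dir
        unfold flip
        exact Finset.mem_union_left _ (Finset.mem_sdiff.2 ⟨he0G, hmem⟩)
      · rintro ⟨x, y⟩ ⟨h1, h2, h3⟩
        rcases mem_flip.1 h1 with ⟨hG1, hS1⟩ | hS1
        · exact hu0 (x, y) ⟨hG1, h2, h3⟩
        · have hy : (y, x) ∈ G.dir := hS hS1
          have hyN : (y, x) ∉ N.dir := hSnew _ hS1
          have h3' : s((y, x).1, (y, x).2) = p := by
            simp only []
            rw [show s(y, x) = s(x, y) from Sym2.eq_swap]
            exact h3
          have := hu0 (y, x) ⟨hy, hyN, h3'⟩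
          exfalso
          rw [this] at hS1
          exact hmem hS1
      
end Flip

section RootComp
set_option linter.unusedSectionVars false
set_option linter.unusedVariables false
set_option maxHeartbeats 1000000

variable {V : Type} [DecidableEq V] {N G : SDG V} {a b w z : V}

lemma rc_ustep (hrc : InRootComp N a) (h : N.ustep a b) : InRootComp N b := by
  intro x hx
  have hxa : N.sreach x a := hx.tail (Or.inr (ustep_symm h))
  have hax := hrc x hxa
  exact (Relation.ReflTransGen.single (show N.sstep b a from Or.inr (ustep_symm h))).trans hax

/-- B1: a node in a root component has no incoming directed edge of `N` -/
lemma root_no_dir_in (hP : N.Proper) (hAc : N.Acyclic) (hEx : ∃ G : SDG V, RootedPartner G N)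
    (hw : InRootComp N w) (hzw : (z, w) ∈ N.dir) : False := by
  obtain ⟨G0, hG0⟩ := hEx
  have hsw : N.sreach w z := hw z (Relation.ReflTransGen.single (Or.inl hzw))
  obtain ⟨m, hm1, hm2, hm3, hm4⟩ := rtg_nodup_chain hsw
  set S : Finset (V × V) :=
    G0.dir.filter (fun e => e ∉ N.dir ∧ (e.2, e.1) ∈ m.zip m.tail) with hSdef
  have hS : S ⊆ G0.dir := Finset.filter_subset _ _
  have hSnew : ∀ e ∈ S, e ∉ N.dir := fun e he => (Finset.mem_filter.1 he).2.1
  set H := flip G0 S with hHdef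
  have hdir : Directs N H := flip_directs hP hG0 hS hSnew
  have hchain : m.Chain' H.dstep := by
    apply chain'_of_zip
    intro x y hxy
    have hstep : N.sstep x y := chain'_zip_mem hm3 hxy
    show (x, y) ∈ H.dir
    rcases hstep with hd | hu
    · exact hdir.2.1 hd
    · rcases partner_orient_cases hP hG0 hu with h1 | h1
      · apply mem_flip.2
        left
        refine ⟨h1, ?_⟩
        intro hc
        rw [hSdef] at hc
        have := (Finset.mem_filter.1 hc).2.2
        exact zip_tail_nodup hm4 hxy this
      · apply mem_flip.2
        right
        rw [hSdef]
        have hu' : s(y, x) ∈ N.undir := by rw [Sym2.eq_swap]; exact hu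
        refine Finset.mem_filter.2 ⟨h1, undir_not_dir hP hu', hxy⟩
  have hreach : H.dreach w z := chain_rtg m hchain hm1 hm2
  have hcyc : H.HasDirCycle := ⟨(z, w), hdir.2.1 hzw, hreach⟩
  exact hAc H hdir (flip_isDirected G0 S) hcyc

end RootComp

section Transfer
set_option linter.unusedSectionVars false
set_option linter.unusedVariables false
set_option maxHeartbeats 1000000

variable {V : Type} [DecidableEq V] {N A B G : SDG V} {a b p q x : V} {l : List V}

lemma chain_head_dreach (hc : l.Chain' G.dstep) (hh : l.head? = some q) :
    ∀ i (h : i < l.length), G.dreach q (l.get ⟨i, h⟩) := by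
  intro i
  induction i with
  | zero =>
    intro h
    cases l with
    | nil => simp at hh
    | cons y t =>
      simp at hh; subst hh
      exact Relation.ReflTransGen.refl
  | succ n ih =>
    intro h
    have hn : n < l.length := by omega
    have hstep := List.isChain_iff_getElem.1 hc n (by omega)
    exact (ih hn).tail hstep

/-- R1: edges along a directed path out of the head of a shared newly-directed edge
are shared between rooted partners -/
lemma partner_edge_transfer (hP : N.Proper) (hA : RootedPartner A N) (hB : RootedPartner B N)
    (hpqA : (p, q) ∈ A.dir) (hpqB : (p, q) ∈ B.dir) (hpqN : (p, q) ∉ N.dir) :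
    ∀ a, A.dreach q a → ∀ b, (a, b) ∈ A.dir → (a, b) ∈ B.dir := by
  intro a ha
  induction ha with
  | refl =>
    intro b hqb
    by_cases hN : (q, b) ∈ N.dir
    · exact partner_dir_sub hB hN
    · have hundir : s(q, b) ∈ N.undir := partner_new_undir hA hqb hN
      rcases partner_orient_cases hP hB hundir with h1 | h1
      · exact h1
      · exfalso
        have hbqN : (b, q) ∉ N.dir := by
          intro hc
          apply hP.2.2 _ hc
          show s(b, q) ∈ N.undir
          rw [Sym2.eq_swap]; exact hundir
        have hideg : B.ideg q = 1 := new_ideg_one hB h1 hbqN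
        have := in_edge_unique (G := B) (b := q) (by omega) h1 rfl hpqB rfl
        have hbp : b = p := congrArg Prod.fst this
        rw [hbp] at hqb hundir
        have hundir' : s(p, q) ∈ N.undir := by
          rw [Sym2.eq_swap]; exact hundir
        exact partner_orient_unique hP hA hundir' hpqA hqb
  | @tail c d hqc hcd ih =>
    intro b hdb
    by_cases hN : (d, b) ∈ N.dir
    · exact partner_dir_sub hB hN
    · have hundir : s(d, b) ∈ N.undir := partner_new_undir hA hdb hN
      rcases partner_orient_cases hP hB hundir with h1 | h1
      · exact h1
      · exfalso
        have hbdN : (b, d) ∉ N.dir := by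
          intro hc
          apply hP.2.2 _ hc
          show s(b, d) ∈ N.undir
          rw [Sym2.eq_swap]; exact hundir
        have hideg : B.ideg d = 1 := new_ideg_one hB h1 hbdN
        have hcdB : (c, d) ∈ B.dir := ih d hcd
        have := in_edge_unique (G := B) (b := d) (by omega) h1 rfl hcdB rfl
        have hbc : b = c := congrArg Prod.fst this
        subst hbc
        exact partner_orient_unique hP hA hundir hdb hcd

lemma path_transfer (hP : N.Proper) (hA : RootedPartner A N) (hB : RootedPartner B N)
    (hpqA : (p, q) ∈ A.dir) (hpqB : (p, q) ∈ B.dir) (hpqN : (p, q) ∉ N.dir)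
    (h : IsDPathList A q x l) : IsDPathList B q x l := by
  obtain ⟨h1, h2, h3⟩ := h
  refine ⟨h1, h2, ?_⟩
  apply chain'_of_zip
  intro y z hyz
  obtain ⟨i, hi1, hi2, hy, hz⟩ := mem_zip_tail hyz
  have hreach := chain_head_dreach h3 h1 i hi1
  rw [hy] at hreach
  have hedge : (y, z) ∈ A.dir := chain'_zip_mem h3 hyz
  exact partner_edge_transfer hP hA hB hpqA hpqB hpqN y hreach z hedge

/-- well-definedness of path counts from the head of a shared newly directed edge -/
lemma pathCount_eq_of_shared (hP : N.Proper) (hA : RootedPartner A N) (hB : RootedPartner B N)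
    (hpqA : (p, q) ∈ A.dir) (hpqB : (p, q) ∈ B.dir) (hpqN : (p, q) ∉ N.dir) (x : V) :
    pathCount A q x = pathCount B q x := by
  unfold pathCount
  congr 1
  ext l
  exact ⟨fun h => path_transfer hP hA hB hpqA hpqB hpqN h,
    fun h => path_transfer hP hB hA hpqB hpqA hpqN h⟩

end Transfer

section MaxChain
set_option linter.unusedSectionVars false
set_option linter.unusedVariables false
set_option maxHeartbeats 1000000

variable {V : Type} [DecidableEq V] {N G : SDG V} {a b : V} {r : V → V → Prop}

lemma chain'_mem_targets {m : List V} (hc : m.Chain' r) (hh : m.head? = some a) :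
    ∀ x ∈ m, x = a ∨ ∃ y, r y x := by
  induction m generalizing a with
  | nil => simp
  | cons y t ih =>
    simp at hh; subst hh
    intro x hx
    rcases List.mem_cons.1 hx with rfl | hx
    · exact Or.inl rfl
    · cases t with
      | nil => simp at hx
      | cons z t' =>
        have hc' := List.isChain_cons_cons.1 hc
        rcases ih hc'.2 rfl x hx with rfl | ⟨w, hw⟩
        · exact Or.inr ⟨y, hc'.1⟩
        · exact Or.inr ⟨w, hw⟩

lemma exists_maximal_chain (r : V → V → Prop) (S : Finset V) (a : V)
    (hstep : ∀ x y, r x y → y ∈ S)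
    (hnodup : ∀ m : List V, m.head? = some a → m.Chain' r → m.Nodup) :
    ∃ (m : List V) (z : V), m.head? = some a ∧ m.getLast? = some z ∧ m.Chain' r ∧
      m.Nodup ∧ ∀ b, ¬ r z b := by
  set C : Set (List V) := {m | m.head? = some a ∧ m.Chain' r} with hC
  have hCsub : C ⊆ {l : List V | l.length ≤ (insert a S).card ∧ ∀ x ∈ l, x ∈ insert a S} := by
    rintro m ⟨h1, h2⟩
    have hmem : ∀ x ∈ m, x ∈ insert a S := by
      intro x hx
      rcases chain'_mem_targets h2 h1 x hx with rfl | ⟨y, hy⟩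
      · exact Finset.mem_insert_self _ _
      · exact Finset.mem_insert_of_mem (hstep y x hy)
    exact ⟨nodup_length_le (hnodup m h1 h2) hmem, hmem⟩
  have hCfin : C.Finite := Set.Finite.subset (finite_bounded_lists _ _) hCsub
  have hCne : C.Nonempty := ⟨[a], rfl, List.isChain_singleton _⟩
  obtain ⟨m, hmC, hmax⟩ := Set.Finite.exists_maximalFor List.length C hCfin hCne
  obtain ⟨h1, h2⟩ := hmC
  have hmne : m ≠ [] := by rintro rfl; simp at h1
  obtain ⟨z, hz⟩ : ∃ z, m.getLast? = some z := by
    cases hzz : m.getLast? with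
    | none => exact absurd (List.getLast?_eq_none_iff.1 hzz) hmne
    | some z => exact ⟨z, rfl⟩
  refine ⟨m, z, h1, hz, h2, hnodup m h1 h2, ?_⟩
  intro b hb
  have hmC' : (m ++ [b]) ∈ C := by
    refine ⟨?_, ?_⟩
    · cases m with
      | nil => simp at h1
      | cons c t => simpa using h1
    · rw [List.Chain', List.isChain_append]
      refine ⟨h2, List.isChain_singleton _, ?_⟩
      intro x hx y hy
      simp at hy; subst hy
      rw [hz] at hx; simp at hx; subst hx
      exact hb
  have := hmax hmC' (by simp)
  simp at this

/-- every node of a tree-child rooted partner has a tree path to a leaf -/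
lemma exists_tree_leaf (hG : RootedPartner G N) (hTC : TreeChildDAG G) (a : V) :
    ∃ (m : List V) (x : V), m.head? = some a ∧ m.getLast? = some x ∧
      m.Chain' (fun c d => (c, d) ∈ G.dir ∧ G.ideg d ≤ 1) ∧ m.Nodup ∧ G.odeg x = 0 := by
  obtain ⟨m, z, h1, h2, h3, h4, h5⟩ :=
    exists_maximal_chain (fun c d => (c, d) ∈ G.dir ∧ G.ideg d ≤ 1)
      (G.dir.image Prod.snd)
      a (fun x y hy => Finset.mem_image.2 ⟨(x, y), hy.1, rfl⟩)
      (fun m hh hc => by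
        by_contra hnd
        exact partner_no_cycle hG
          (chain_dup_cycle (hc.imp (fun _ _ h => h.1)) hnd))
  refine ⟨m, z, h1, h2, h3, h4, ?_⟩
  by_contra hodeg
  have hpos : 0 < G.odeg z := Nat.pos_of_ne_zero hodeg
  obtain ⟨w, hw1, hw2⟩ := hTC z hpos
  exact h5 w ⟨hw1, hw2⟩

/-- maximal ascending chain of newly directed in-edges -/
lemma exists_ascent (hG : RootedPartner G N) (a : V) :
    ∃ (m : List V) (z : V), m.head? = some a ∧ m.getLast? = some z ∧
      m.Chain' (fun c d => (d, c) ∈ G.dir ∧ (d, c) ∉ N.dir) ∧ m.Nodup ∧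
      ∀ b, ¬ ((b, z) ∈ G.dir ∧ (b, z) ∉ N.dir) := by
  apply exists_maximal_chain (fun c d => (d, c) ∈ G.dir ∧ (d, c) ∉ N.dir)
    (G.dir.image Prod.fst) a
    (fun x y hy => Finset.mem_image.2 ⟨(y, x), hy.1, rfl⟩)
  intro m hh hc
  rw [← List.nodup_reverse]
  by_contra hnd
  apply partner_no_cycle hG
  apply chain_dup_cycle (l := m.reverse) _ hnd
  rw [List.Chain', List.isChain_reverse]
  exact hc.imp (fun _ _ h => h.1)

end MaxChain

section FlipChain
set_option linter.unusedSectionVars false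
set_option linter.unusedVariables false
set_option maxHeartbeats 1600000

variable {V : Type} [DecidableEq V] {N G : SDG V} {u a b : V}

/-- acyclicity of a directed graph follows from having no directed cycle -/
lemma acyclic_of_directed {H : SDG V} (hd : H.IsDirected) (hc : ¬ H.HasDirCycle) :
    H.Acyclic := by
  intro G' hdir hdird hcyc
  have hsub : G'.dir = H.dir := by
    apply Finset.Subset.antisymm
    · intro e he
      by_contra hne
      have := hdir.2.2.1 e he hne
      rw [hd] at this
      exact absurd this.1 (Finset.notMem_empty _)
    · exact hdir.2.1
  apply hc
  obtain ⟨e, he, hr⟩ := hcyc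
  refine ⟨e, by rw [← hsub]; exact he, ?_⟩
  apply Relation.ReflTransGen.mono _ _ _ hr
  intro x y hxy
  show (x, y) ∈ H.dir
  rw [← hsub]
  exact hxy

lemma rc_chain (hG : RootedPartner G N) :
    ∀ (K : List V) (u : V), K.Chain' (fun c d => (d, c) ∈ G.dir ∧ (d, c) ∉ N.dir) →
      K.head? = some u → InRootComp N u → ∀ x ∈ K, InRootComp N x := by
  intro K
  induction K with
  | nil => intro u _ _ _ x hx; simp at hx
  | cons y t ih =>
    intro u hc hh hu x hx
    simp at hh; subst hh
    rcases List.mem_cons.1 hx with rfl | hx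
    · exact hu
    · cases t with
      | nil => simp at hx
      | cons z t' =>
        have hc' := List.isChain_cons_cons.1 hc
        have hzrc : InRootComp N z := by
          apply rc_ustep hu
          have : s(z, y) ∈ N.undir := partner_new_undir hG hc'.1.1 hc'.1.2
          show s(y, z) ∈ N.undir
          rw [Sym2.eq_swap]; exact this
        exact ih z hc'.2 rfl hzrc x hx

/-- the "flip the maximal ascending chain" construction -/
lemma flipChain (hP : N.Proper) (hAc : N.Acyclic) (hEx : ∃ G' : SDG V, RootedPartner G' N)
    (hG : RootedPartner G N) (hrcu : InRootComp N u) :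
    ∃ (H : SDG V) (K : List V) (rt : V),
      RootedPartner H N ∧
      K.head? = some u ∧
      K.Chain' (fun c d => (d, c) ∈ G.dir ∧ (d, c) ∉ N.dir) ∧ K.Nodup ∧
      K.getLast? = some rt ∧
      (∀ b, ¬ ((b, rt) ∈ G.dir ∧ (b, rt) ∉ N.dir)) ∧
      (∀ i (h : i < K.length), ∀ e ∈ H.dir, e.2 = K.get ⟨i, h⟩ →
          1 ≤ i ∧ e = (K.get ⟨i-1, by omega⟩, K.get ⟨i, h⟩)) ∧
      (∀ i (h : i < K.length), ∀ e ∈ G.dir, e.2 = K.get ⟨i, h⟩ →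
          ∃ h' : i+1 < K.length, e = (K.get ⟨i+1, h'⟩, K.get ⟨i, h⟩)) ∧
      (∀ i (h : i + 1 < K.length), (K.get ⟨i, by omega⟩, K.get ⟨i+1, h⟩) ∈ H.dir) ∧
      (∀ b, b ∉ K → ∀ e : V × V, (e ∈ H.dir ∧ e.2 = b ↔ e ∈ G.dir ∧ e.2 = b)) := by
  obtain ⟨K, rt, hK1, hK2, hK3, hK4, hK5⟩ := exists_ascent (N := N) hG u
  have hKne : K ≠ [] := by rintro rfl; simp at hK1
  have hrt : K.getLast hKne = rt := by
    have := List.getLast?_eq_getLast hKne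
    rw [hK2] at this
    exact (Option.some_inj.1 this).symm
  have hget_congr : ∀ (i j : ℕ) (hi : i < K.length) (hj : j < K.length), i = j →
      K.get ⟨i, hi⟩ = K.get ⟨j, hj⟩ := by
    intro i j hi hj hij; subst hij; rfl
  have hrtget : ∀ (h : K.length - 1 < K.length), K.get ⟨K.length - 1, h⟩ = rt := by
    intro h
    rw [List.get_eq_getElem, ← List.getLast_eq_getElem hKne, hrt]
  have hKrc : ∀ x ∈ K, InRootComp N x := rc_chain hG K u hK3 hK1 hrcu
  have hbs : ∀ i (h : i + 1 < K.length),
      (K.get ⟨i+1, h⟩, K.get ⟨i, by omega⟩) ∈ G.dir ∧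
      (K.get ⟨i+1, h⟩, K.get ⟨i, by omega⟩) ∉ N.dir := by
    intro i h
    exact List.isChain_iff_getElem.1 hK3 i (by omega)
  set S : Finset (V × V) := ((K.zip K.tail).map Prod.swap).toFinset with hSdef
  have hmemS : ∀ e : V × V, e ∈ S ↔ (e.2, e.1) ∈ K.zip K.tail := by
    intro e
    rw [hSdef, List.mem_toFinset, List.mem_map]
    constructor
    · rintro ⟨f, hf, rfl⟩
      simpa using hf
    · intro h
      exact ⟨(e.2, e.1), h, rfl⟩
  have hSchar : ∀ e : V × V, e ∈ S ↔ ∃ (i : ℕ) (h : i + 1 < K.length),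
      e = (K.get ⟨i+1, h⟩, K.get ⟨i, by omega⟩) := by
    intro e
    rw [hmemS]
    constructor
    · intro h
      obtain ⟨i, h1, h2, ha, hb⟩ := mem_zip_tail h
      refine ⟨i, h2, ?_⟩
      rw [hb, ha]
    · rintro ⟨i, h, rfl⟩
      exact zip_tail_mem h
  have hSsub : S ⊆ G.dir := by
    intro e he
    obtain ⟨i, h, rfl⟩ := (hSchar e).1 he
    exact (hbs i h).1
  have hSnew : ∀ e ∈ S, e ∉ N.dir := by
    intro e he
    obtain ⟨i, h, rfl⟩ := (hSchar e).1 he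
    exact (hbs i h).2
  set H := flip G S with hHdef
  have hdirects : Directs N H := flip_directs hP hG hSsub hSnew
  have hKget_inj : ∀ (i j : ℕ) (hi : i < K.length) (hj : j < K.length),
      K.get ⟨i, hi⟩ = K.get ⟨j, hj⟩ → i = j := by
    intro i j hi hj hij
    have := List.nodup_iff_injective_get.1 hK4 hij
    simpa using this
  have hinG : ∀ i (h : i < K.length), ∀ e ∈ G.dir, e.2 = K.get ⟨i, h⟩ →
      ∃ h' : i+1 < K.length, e = (K.get ⟨i+1, h'⟩, K.get ⟨i, h⟩) := by
    intro i h e he h2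
    by_cases hi1 : i + 1 < K.length
    · refine ⟨hi1, ?_⟩
      have hideg : G.ideg (K.get ⟨i, h⟩) = 1 := new_ideg_one hG (hbs i hi1).1 (hbs i hi1).2
      have := in_edge_unique (G := G) (b := K.get ⟨i, h⟩) (by omega) he h2 (hbs i hi1).1 rfl
      rw [this]
    · exfalso
      have hieq : i = K.length - 1 := by omega
      subst hieq
      have hilast : K.get ⟨K.length - 1, h⟩ = rt := hrtget h
      by_cases heN : e ∈ N.dir
      · apply root_no_dir_in hP hAc hEx (hKrc rt ?_) (z := e.1)
        · have he2 : e = (e.1, rt) := by rw [← hilast, ← h2]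
          rwa [he2] at heN
        · rw [← hrt]; exact List.getLast_mem hKne
      · apply hK5 e.1
        have he2 : e = (e.1, rt) := by rw [← hilast, ← h2]
        rw [← he2]
        exact ⟨he, heN⟩
  have hinH : ∀ i (h : i < K.length), ∀ e ∈ H.dir, e.2 = K.get ⟨i, h⟩ →
      1 ≤ i ∧ e = (K.get ⟨i-1, by omega⟩, K.get ⟨i, h⟩) := by
    intro i h e he h2
    have he' : (e.1, e.2) ∈ H.dir := by rwa [← Prod.mk.eta (p := e)] at he
    rcases mem_flip.1 he' with ⟨heG, heS⟩ | heS
    · exfalso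
      obtain ⟨h', hee⟩ := hinG i h (e.1, e.2) heG h2
      apply heS
      rw [hee]
      exact (hSchar _).2 ⟨i, h', rfl⟩
    · obtain ⟨j, hj, hje⟩ := (hSchar _).1 heS
      have h21 : e.2 = K.get ⟨j+1, hj⟩ := congrArg Prod.fst hje
      have h11 : e.1 = K.get ⟨j, by omega⟩ := congrArg Prod.snd hje
      have hij : i = j + 1 := hKget_inj _ _ _ _ (h2.symm.trans h21)
      refine ⟨by omega, ?_⟩
      have hidx : K.get ⟨i - 1, by omega⟩ = K.get ⟨j, by omega⟩ :=
        hget_congr _ _ _ _ (by omega)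
      rw [← Prod.mk.eta (p := e), h2, h11, hidx]
  have hfwd : ∀ i (h : i + 1 < K.length), (K.get ⟨i, by omega⟩, K.get ⟨i+1, h⟩) ∈ H.dir := by
    intro i h
    apply mem_flip.2
    right
    exact (hSchar _).2 ⟨i, h, rfl⟩
  have hout : ∀ b, b ∉ K → ∀ e : V × V, (e ∈ H.dir ∧ e.2 = b ↔ e ∈ G.dir ∧ e.2 = b) := by
    intro b hb e
    constructor
    · rintro ⟨he, rfl⟩
      refine ⟨?_, rfl⟩
      have he' : (e.1, e.2) ∈ H.dir := by rwa [← Prod.mk.eta (p := e)] at he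
      rcases mem_flip.1 he' with ⟨heG, -⟩ | heS
      · rwa [← Prod.mk.eta (p := e)]
      · exfalso
        obtain ⟨j, hj, hje⟩ := (hSchar _).1 heS
        apply hb
        have h22 : e.2 = K.get ⟨j+1, hj⟩ := congrArg Prod.fst hje
        rw [h22]
        exact List.get_mem _ _
    · rintro ⟨he, rfl⟩
      refine ⟨?_, rfl⟩
      have heS : e ∉ S := by
        intro hc
        obtain ⟨j, hj, hje⟩ := (hSchar _).1 hc
        apply hb
        have h22 : e.2 = K.get ⟨j, by omega⟩ := by rw [hje]
        rw [h22]
        exact List.get_mem _ _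
      rw [← Prod.mk.eta (p := e)]
      apply mem_flip.2
      left
      exact ⟨by rwa [← Prod.mk.eta (p := e)] at he, by rwa [← Prod.mk.eta (p := e)] at heS⟩
  have hidegH : ∀ i (h : i < K.length), H.ideg (K.get ⟨i, h⟩) ≤ 1 := by
    intro i h
    apply Finset.card_le_one.2
    intro e1 he1 e2 he2
    rw [Finset.mem_filter] at he1 he2
    have h1 := hinH i h e1 he1.1 he1.2
    have h2 := hinH i h e2 he2.1 he2.2
    rw [h1.2, h2.2]
  have hidegG : ∀ i (h : i < K.length), G.ideg (K.get ⟨i, h⟩) ≤ 1 := by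
    intro i h
    apply Finset.card_le_one.2
    intro e1 he1 e2 he2
    rw [Finset.mem_filter] at he1 he2
    obtain ⟨hh1, he1'⟩ := hinG i h e1 he1.1 he1.2
    obtain ⟨hh2, he2'⟩ := hinG i h e2 he2.1 he2.2
    rw [he1', he2']
  have hidegeq : ∀ b, b ∉ K → H.ideg b = G.ideg b := by
    intro b hb
    unfold ideg
    congr 1
    ext e
    rw [Finset.mem_filter, Finset.mem_filter]
    exact hout b hb e
  have hhyb : H.hybridEdges = G.hybridEdges := by
    ext e
    unfold hybridEdges
    rw [Finset.mem_filter, Finset.mem_filter]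
    by_cases hb : e.2 ∈ K
    · obtain ⟨⟨i, hi⟩, hget⟩ := List.mem_iff_get.1 hb
      constructor
      · rintro ⟨he, hd⟩
        exfalso
        have := hidegH i hi
        rw [hget] at this
        omega
      · rintro ⟨he, hd⟩
        exfalso
        have := hidegG i hi
        rw [hget] at this
        omega
    · constructor
      · rintro ⟨he, hd⟩
        have h1 := (hout e.2 hb e).1 ⟨he, rfl⟩
        rw [hidegeq e.2 hb] at hd
        exact ⟨h1.1, hd⟩
      · rintro ⟨he, hd⟩
        have h1 := (hout e.2 hb e).2 ⟨he, rfl⟩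
        rw [← hidegeq e.2 hb] at hd
        exact ⟨h1.1, hd⟩
  have hL2 : ∀ c a1, H.dreach a1 c → ∀ i (h : i < K.length), c = K.get ⟨i, h⟩ →
      ∃ (j : ℕ) (hj : j < K.length), j ≤ i ∧ a1 = K.get ⟨j, hj⟩ := by
    intro c a1 hr
    induction hr with
    | refl => intro i h hc; exact ⟨i, h, le_rfl, hc⟩
    | @tail c' d hac hcd ih =>
      intro i h hd
      have hin := hinH i h (c', d) hcd hd
      obtain ⟨hi1, heq⟩ := hin
      have hc' : c' = K.get ⟨i - 1, by omega⟩ := congrArg Prod.fst heq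
      obtain ⟨j, hj, hji, ha⟩ := ih (i-1) (by omega) hc'
      exact ⟨j, hj, by omega, ha⟩
  have hL3 : ∀ a1 c, H.dreach a1 c → a1 ∉ K → G.dreach a1 c ∧ c ∉ K := by
    intro a1 c hr ha1
    induction hr with
    | refl => exact ⟨Relation.ReflTransGen.refl, ha1⟩
    | @tail c' d hac hcd ih =>
      obtain ⟨hGr, hc'K⟩ := ih
      have hdK : d ∉ K := by
        intro hd
        obtain ⟨⟨i, hi⟩, hget⟩ := List.mem_iff_get.1 hd
        have hin := hinH i hi (c', d) hcd (by rw [hget])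
        apply hc'K
        have hc2 : c' = K.get ⟨i - 1, by omega⟩ := congrArg Prod.fst hin.2
        rw [hc2]
        exact List.get_mem _ _
      refine ⟨hGr.tail ?_, hdK⟩
      show (c', d) ∈ G.dir
      rcases mem_flip.1 hcd with ⟨h1, -⟩ | h1
      · exact h1
      · exfalso
        obtain ⟨j, hj, hje⟩ := (hSchar _).1 h1
        apply hdK
        have hd2 : d = K.get ⟨j+1, hj⟩ := congrArg Prod.fst hje
        rw [hd2]
        exact List.get_mem _ _
  have hnocyc : ¬ H.HasDirCycle := by
    rintro ⟨⟨x, y⟩, hxy, hyx⟩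
    by_cases hx : x ∈ K
    · obtain ⟨⟨i, hi⟩, hget⟩ := List.mem_iff_get.1 hx
      obtain ⟨j, hj, hji, hy⟩ := hL2 x y hyx i hi hget.symm
      have hin := hinH j hj (x, y) hxy hy
      obtain ⟨hj1, heq⟩ := hin
      have hxj : x = K.get ⟨j - 1, by omega⟩ := congrArg Prod.fst heq
      have : i = j - 1 := by
        apply hKget_inj i (j-1) hi (by omega)
        rw [hget]; exact hxj
      omega
    · have hyK : y ∉ K := by
        intro hy
        obtain ⟨⟨i, hi⟩, hget⟩ := List.mem_iff_get.1 hy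
        have hin := hinH i hi (x, y) hxy (by rw [hget])
        apply hx
        have hx2 : x = K.get ⟨i - 1, by omega⟩ := congrArg Prod.fst hin.2
        rw [hx2]
        exact List.get_mem _ _
      obtain ⟨hGr, -⟩ := hL3 y x hyx hyK
      apply partner_no_cycle hG
      refine ⟨(x, y), ?_, hGr⟩
      rcases mem_flip.1 hxy with ⟨h1, -⟩ | h1
      · exact h1
      · exfalso
        obtain ⟨j, hj, hje⟩ := (hSchar _).1 h1
        apply hyK
        have hy2 : y = K.get ⟨j+1, hj⟩ := congrArg Prod.fst hje
        rw [hy2]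
        exact List.get_mem _ _
  have hHpartner : RootedPartner H N := by
    refine ⟨⟨hdirects, acyclic_of_directed rfl hnocyc, ?_⟩, rfl⟩
    rw [hhyb, partner_hybrid hG]
  exact ⟨H, K, rt, hHpartner, hK1, hK3, hK4, hK2, hK5, hinH, hinG, hfwd, hout⟩

end FlipChain

section Helpers
set_option linter.unusedSectionVars false
set_option linter.unusedVariables false
set_option maxHeartbeats 1600000

variable {V : Type} [DecidableEq V] {N G D : SDG V} {u a b : V}

lemma list_get_congr (l : List V) {i j : ℕ} (hi : i < l.length) (hj : j < l.length)
    (h : i = j) : l.get ⟨i, hi⟩ = l.get ⟨j, hj⟩ := by subst h; rfl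

lemma get0_of_head {l : List V} (h : l.head? = some a) (h0 : 0 < l.length) :
    l.get ⟨0, h0⟩ = a := by
  cases l with
  | nil => simp at h
  | cons x t => simpa using h

lemma getlast_of_getLast {l : List V} (h : l.getLast? = some a)
    (h0 : l.length - 1 < l.length) : l.get ⟨l.length - 1, h0⟩ = a := by
  have hne : l ≠ [] := by rintro rfl; simp at h
  have h1 := List.getLast?_eq_getLast hne
  rw [h] at h1
  rw [List.get_eq_getElem, ← List.getLast_eq_getElem hne]
  exact (Option.some_inj.1 h1).symm

/-- reachability along forward edges of an indexed chain -/
lemma dreach_of_fwd {K : List V}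
    (hfwd : ∀ i (h : i + 1 < K.length), (K.get ⟨i, by omega⟩, K.get ⟨i+1, h⟩) ∈ D.dir) :
    ∀ j i (hi : i < K.length) (hj : j < K.length), i ≤ j →
      D.dreach (K.get ⟨i, hi⟩) (K.get ⟨j, hj⟩) := by
  intro j
  induction j with
  | zero =>
    intro i hi hj hij
    have : i = 0 := by omega
    subst this
    exact Relation.ReflTransGen.refl
  | succ n ih =>
    intro i hi hj hij
    rcases Nat.lt_or_ge i (n+1) with hlt | hge
    · have := ih i hi (by omega) (by omega)
      exact this.tail (hfwd n hj)
    · have : i = n + 1 := by omega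
      subst this
      exact Relation.ReflTransGen.refl

/-- reachability along backward edges of an indexed chain -/
lemma dreach_of_back {K : List V}
    (hback : ∀ i (h : i + 1 < K.length), (K.get ⟨i+1, h⟩, K.get ⟨i, by omega⟩) ∈ D.dir) :
    ∀ j i (hi : i < K.length) (hj : j < K.length), i ≤ j →
      D.dreach (K.get ⟨j, hj⟩) (K.get ⟨i, hi⟩) := by
  intro j
  induction j with
  | zero =>
    intro i hi hj hij
    have : i = 0 := by omega
    subst this
    exact Relation.ReflTransGen.refl
  | succ n ih =>
    intro i hi hj hij
    rcases Nat.lt_or_ge i (n+1) with hlt | hge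
    · have := ih i hi (by omega) (by omega)
      exact Relation.ReflTransGen.head (hback n hj) this
    · have : i = n + 1 := by omega
      subst this
      exact Relation.ReflTransGen.refl

/-- positions of sources reaching a chain node, for "in-edges go up" graphs -/
lemma dreach_pos_up {K : List V}
    (hin : ∀ i (h : i < K.length), ∀ e ∈ D.dir, e.2 = K.get ⟨i, h⟩ →
      ∃ h' : i+1 < K.length, e = (K.get ⟨i+1, h'⟩, K.get ⟨i, h⟩)) :
    ∀ a c, D.dreach a c → ∀ i (h : i < K.length), c = K.get ⟨i, h⟩ →
      ∃ (j : ℕ) (hj : j < K.length), i ≤ j ∧ a = K.get ⟨j, hj⟩ := by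
  intro a c hr
  induction hr with
  | refl => intro i h hc; exact ⟨i, h, le_rfl, hc⟩
  | @tail c' d hac hcd ih =>
    intro i h hd
    obtain ⟨h', heq⟩ := hin i h (c', d) hcd hd
    have hc' : c' = K.get ⟨i+1, h'⟩ := congrArg Prod.fst heq
    obtain ⟨j, hj, hji, ha⟩ := ih (i+1) h' hc'
    exact ⟨j, hj, by omega, ha⟩

/-- positions of sources reaching a chain node, for "in-edges go down" graphs -/
lemma dreach_pos_down {K : List V}
    (hin : ∀ i (h : i < K.length), ∀ e ∈ D.dir, e.2 = K.get ⟨i, h⟩ →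
      1 ≤ i ∧ e = (K.get ⟨i-1, by omega⟩, K.get ⟨i, h⟩)) :
    ∀ a c, D.dreach a c → ∀ i (h : i < K.length), c = K.get ⟨i, h⟩ →
      ∃ (j : ℕ) (hj : j < K.length), j ≤ i ∧ a = K.get ⟨j, hj⟩ := by
  intro a c hr
  induction hr with
  | refl => intro i h hc; exact ⟨i, h, le_rfl, hc⟩
  | @tail c' d hac hcd ih =>
    intro i h hd
    obtain ⟨h1, heq⟩ := hin i h (c', d) hcd hd
    have hc' : c' = K.get ⟨i-1, by omega⟩ := congrArg Prod.fst heq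
    obtain ⟨j, hj, hji, ha⟩ := ih (i-1) (by omega) hc'
    exact ⟨j, hj, by omega, ha⟩

/-- backward propagation of orientation along an undirected path -/
lemma prop_backward (hP : N.Proper) (hG : RootedPartner G N) {m : List V}
    (hc : m.Chain' N.ustep) (hnd : m.Nodup)
    (hlast : ∀ (h2 : m.length - 1 < m.length) (h3 : m.length - 2 < m.length),
      2 ≤ m.length → (m.get ⟨m.length - 1, h2⟩, m.get ⟨m.length - 2, h3⟩) ∈ G.dir) :
    ∀ i (h : i + 1 < m.length), (m.get ⟨i+1, h⟩, m.get ⟨i, by omega⟩) ∈ G.dir := by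
  have key : ∀ j i (h : i + 1 < m.length), i + j = m.length - 2 →
      (m.get ⟨i+1, h⟩, m.get ⟨i, by omega⟩) ∈ G.dir := by
    intro j
    induction j with
    | zero =>
      intro i h hij
      have h2 : m.length - 1 < m.length := by omega
      have h3 : m.length - 2 < m.length := by omega
      have hl := hlast h2 h3 (by omega)
      have e1 : m.get ⟨m.length - 1, h2⟩ = m.get ⟨i+1, h⟩ := list_get_congr m _ _ (by omega)
      have e2 : m.get ⟨m.length - 2, h3⟩ = m.get ⟨i, by omega⟩ := list_get_congr m _ _ (by omega)
      rw [e1, e2] at hl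
      exact hl
    | succ n ih =>
      intro i h hij
      have hnext : i + 1 + 1 < m.length := by omega
      have hup := ih (i+1) hnext (by omega)
      -- the edge between m[i] and m[i+1] is undirected in N
      have hu : N.ustep (m.get ⟨i, by omega⟩) (m.get ⟨i+1, h⟩) :=
        List.isChain_iff_getElem.1 hc i (by omega)
      have hundir : s(m.get ⟨i, by omega⟩, m.get ⟨i+1, h⟩) ∈ N.undir := hu
      rcases partner_orient_cases hP hG hundir with h1 | h1
      · exfalso
        -- two in-edges of m[i+1] : (m[i+2], m[i+1]) new and (m[i], m[i+1])
        have hnew : (m.get ⟨i+1+1, hnext⟩, m.get ⟨i+1, by omega⟩) ∉ N.dir := by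
          have hu2 : s(m.get ⟨i+1, by omega⟩, m.get ⟨i+1+1, hnext⟩) ∈ N.undir :=
            List.isChain_iff_getElem.1 hc (i+1) (by omega)
          apply undir_not_dir hP
          rw [Sym2.eq_swap]
          exact hu2
        have hideg : G.ideg (m.get ⟨i+1, by omega⟩) = 1 := new_ideg_one hG hup hnew
        have huniq := in_edge_unique (G := G) (b := m.get ⟨i+1, h⟩)
          (le_of_eq hideg) h1 rfl hup rfl
        have hfst : m.get ⟨i, by omega⟩ = m.get ⟨i+1+1, hnext⟩ := by
          have := congrArg Prod.fst huniq
          simpa using this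
        have hii := List.nodup_iff_injective_get.1 hnd hfst
        simp at hii
        omega
      · exact h1
  intro i h
  exact key (m.length - 2 - i) i h (by omega)

lemma rc_ulist {l : List V} (hc : l.Chain' N.ustep) (hh : l.head? = some u)
    (hu : InRootComp N u) : ∀ x ∈ l, InRootComp N x := by
  induction l generalizing u with
  | nil => simp
  | cons y t ih =>
    simp at hh; subst hh
    intro x hx
    rcases List.mem_cons.1 hx with rfl | hx
    · exact hu
    · cases t with
      | nil => simp at hx
      | cons z t' =>
        have hc' := List.isChain_cons_cons.1 hc
        exact ih hc'.2 rfl (rc_ustep hu hc'.1) x hx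

lemma get_dropLast (l : List V) (i : ℕ) (h : i < l.dropLast.length) :
    l.dropLast.get ⟨i, h⟩ =
      l.get ⟨i, by have := List.length_dropLast (xs := l); omega⟩ := by
  rw [List.get_eq_getElem, List.get_eq_getElem, List.getElem_dropLast]

lemma odeg_pos_of_edge {A B : SDG V} (hL : LNetwork N) (hA : RootedPartner A N)
    (hB : RootedPartner B N) (hab : (a, b) ∈ A.dir) : 0 < B.odeg a := by
  by_contra h0
  have hodeg : B.odeg a = 0 := by omega
  have hunr : IsUnrootedLeaf N a := ⟨B, hB, hodeg⟩
  have := hL.2 a hunr A hA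
  unfold odeg at this
  have hmem : (a, b) ∈ A.dir.filter (fun e => e.1 = a) := Finset.mem_filter.2 ⟨hab, rfl⟩
  have := Finset.card_pos.2 ⟨_, hmem⟩
  omega

end Helpers

section Main
set_option linter.unusedSectionVars false
set_option linter.unusedVariables false
set_option maxHeartbeats 4000000

theorem statement_15 {V : Type} [DecidableEq V] (N : SDG V) (hP : N.Proper)
    (hL : LNetwork N) (hTC : StronglyTreeChild N)
    (u v p q : V) (huv : s(u, v) ∈ N.undir) (hpq : s(p, q) ∈ N.undir)
    (hrc : InRootComp N u)
    -- the undirected tree path from u to q contains v and p, in that order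
    (hpath : ∃ l : List V, l.Chain' N.ustep ∧ l.Nodup ∧
      l.head? = some u ∧ l.getLast? = some q ∧
      (l.drop 1).head? = some v ∧ l.dropLast.getLast? = some p) :
    muLE N (muD N p q) (muD N u v) ∧
      muIncomp N (muD N v u) (muD N p q) ∧
      muIncomp N (muD N u v) (muD N q p) := by
  obtain ⟨l, hlc, hlnd, hlh, hlq, hlv, hlp⟩ := hpath
  have hAc : N.Acyclic := hL.1.1
  obtain ⟨G0, hG0⟩ := hL.1.2
  have hEx : ∃ G : SDG V, RootedPartner G N := ⟨G0, hG0⟩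
  have hlen2 : 2 ≤ l.length := by
    rcases l with _ | ⟨a, _ | ⟨b, t⟩⟩
    · simp at hlh
    · simp at hlv
    · simp
  have hlu0 : ∀ h : 0 < l.length, l.get ⟨0, h⟩ = u := fun h => get0_of_head hlh h
  have hlv1 : ∀ h : 1 < l.length, l.get ⟨1, h⟩ = v := by
    intro h
    rcases l with _ | ⟨a, _ | ⟨b, t⟩⟩
    · simp at hlh
    · simp at hlv
    · simpa using hlv
  have hlqL : ∀ h : l.length - 1 < l.length, l.get ⟨l.length - 1, h⟩ = q :=
    fun h => getlast_of_getLast hlq h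
  have hlpL : ∀ h : l.length - 2 < l.length, l.get ⟨l.length - 2, h⟩ = p := by
    intro h
    have hdl : l.dropLast.length = l.length - 1 := List.length_dropLast
    have hdl0 : l.dropLast.length - 1 < l.dropLast.length := by omega
    have h1 := getlast_of_getLast hlp hdl0
    rw [get_dropLast] at h1
    rw [← h1]
    exact list_get_congr l _ _ (by omega)
  -- root-component membership along the path
  have hrcl : ∀ x ∈ l, InRootComp N x := rc_ulist hlc hlh hrc
  have hrcq : InRootComp N q := by
    apply hrcl q
    rw [← hlqL (by omega)]
    exact List.get_mem _ _
  -- a partner directing (q, p)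
  obtain ⟨Bm, hBm, hqpBm⟩ : ∃ Bm : SDG V, RootedPartner Bm N ∧ (q, p) ∈ Bm.dir := by
    rcases partner_orient_cases hP hG0 hpq with hpq0 | hqp0
    · obtain ⟨H', K', rt', hH', hK1', hK3', hK4', hK2', hK5', hinH', hinG', hfwd', hout'⟩ :=
        flipChain hP hAc hEx hG0 hrcq
      have hK0' : 0 < K'.length := by
        rcases K' with - | ⟨c, t⟩
        · simp at hK1'
        · simp
      have hq0 : (p, q).2 = K'.get ⟨0, hK0'⟩ := by
        rw [get0_of_head hK1' hK0']
      obtain ⟨h1', heq'⟩ := hinG' 0 hK0' (p, q) hpq0 hq0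
      have hfe := hfwd' 0 h1'
      refine ⟨H', hH', ?_⟩
      have e0 : K'.get ⟨0, by omega⟩ = q := get0_of_head hK1' _
      have e1 : K'.get ⟨0+1, h1'⟩ = p := (congrArg Prod.fst heq').symm
      rw [e0, e1] at hfe
      exact hfe
    · exact ⟨G0, hG0, hqp0⟩
  -- the whole path is directed backwards in Bm
  have hback : ∀ i (h : i + 1 < l.length),
      (l.get ⟨i+1, h⟩, l.get ⟨i, by omega⟩) ∈ Bm.dir := by
    apply prop_backward hP hBm hlc hlnd
    intro h2 h3 hlen
    rw [hlqL h2, hlpL h3]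
    exact hqpBm
  have hvuBm : (v, u) ∈ Bm.dir := by
    have hh := hback 0 (by omega)
    rwa [hlv1 (by omega), hlu0 (by omega)] at hh
  -- B+ : flip the maximal ascending chain of Bm at u
  obtain ⟨Bp, K, rt, hBp, hK1, hK3, hK4, hK2, hK5, hinH, hinG, hfwd, hout⟩ :=
    flipChain hP hAc hEx hBm hrc
  have hnBm : ¬ Bm.HasDirCycle := partner_no_cycle hBm
  have hnBp : ¬ Bp.HasDirCycle := partner_no_cycle hBp
  have hK0 : 0 < K.length := by
    rcases K with - | ⟨c, t⟩
    · simp at hK1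
    · simp
  have hKu : ∀ h : 0 < K.length, K.get ⟨0, h⟩ = u := fun h => get0_of_head hK1 h
  have hKget_inj : ∀ (i j : ℕ) (hi : i < K.length) (hj : j < K.length),
      K.get ⟨i, hi⟩ = K.get ⟨j, hj⟩ → i = j := by
    intro i j hi hj hij
    have := List.nodup_iff_injective_get.1 hK4 hij
    simpa using this
  -- the path embeds at the bottom of the chain
  have hembed : ∀ i (hi : i < l.length), ∃ hK : i < K.length,
      l.get ⟨i, hi⟩ = K.get ⟨i, hK⟩ := by
    intro i
    induction i with
    | zero =>
      intro hi
      exact ⟨hK0, by rw [hlu0 hi, hKu hK0]⟩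
    | succ n ih =>
      intro hi
      obtain ⟨hKn, hn⟩ := ih (by omega)
      have hedge := hback n hi
      have he2 : (l.get ⟨n+1, hi⟩, l.get ⟨n, by omega⟩).2 = K.get ⟨n, hKn⟩ := hn
      obtain ⟨h', heq⟩ := hinG n hKn _ hedge he2
      exact ⟨h', congrArg Prod.fst heq⟩
  have hLK : l.length ≤ K.length := by
    obtain ⟨hK', -⟩ := hembed (l.length - 1) (by omega)
    omega
  have hKv : ∀ h : 1 < K.length, K.get ⟨1, h⟩ = v := by
    intro h
    obtain ⟨hK', he⟩ := hembed 1 (by omega)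
    rw [← he]
    exact hlv1 _
  have hKq : ∀ h : l.length - 1 < K.length, K.get ⟨l.length - 1, h⟩ = q := by
    intro h
    obtain ⟨hK', he⟩ := hembed (l.length - 1) (by omega)
    rw [← he]
    exact hlqL _
  have hKp : ∀ h : l.length - 2 < K.length, K.get ⟨l.length - 2, h⟩ = p := by
    intro h
    obtain ⟨hK', he⟩ := hembed (l.length - 2) (by omega)
    rw [← he]
    exact hlpL _
  -- oriented edges in Bp
  have huvBp : (u, v) ∈ Bp.dir := by
    have h1 : (0:ℕ) + 1 < K.length := by omega
    have hh := hfwd 0 h1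
    rwa [hKu (by omega), hKv (by omega)] at hh
  have hpqBp : (p, q) ∈ Bp.dir := by
    have h1 : (l.length - 2) + 1 < K.length := by omega
    have hh := hfwd (l.length - 2) h1
    have e1 : K.get ⟨l.length - 2 + 1, h1⟩ = K.get ⟨l.length - 1, by omega⟩ :=
      list_get_congr K _ _ (by omega)
    rw [hKp (by omega), e1, hKq (by omega)] at hh
    exact hh
  -- backward edges of the chain (in Bm)
  have hbackK : ∀ i (h : i + 1 < K.length),
      (K.get ⟨i+1, h⟩, K.get ⟨i, by omega⟩) ∈ Bm.dir :=
    fun i h => (List.isChain_iff_getElem.1 hK3 i (by omega)).1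
  -- choice unfoldings for muD
  have hEuv : ∃ G : SDG V, RootedPartner G N ∧ (u, v) ∈ G.dir := ⟨Bp, hBp, huvBp⟩
  have hEvu : ∃ G : SDG V, RootedPartner G N ∧ (v, u) ∈ G.dir := ⟨Bm, hBm, hvuBm⟩
  have hEpq : ∃ G : SDG V, RootedPartner G N ∧ (p, q) ∈ G.dir := ⟨Bp, hBp, hpqBp⟩
  have hEqp : ∃ G : SDG V, RootedPartner G N ∧ (q, p) ∈ G.dir := ⟨Bm, hBm, hqpBm⟩
  have hmuv : muD N u v = fun x => pathCount hEuv.choose v x := dif_pos hEuv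
  have hmvu : muD N v u = fun x => pathCount hEvu.choose u x := dif_pos hEvu
  have hmpq : muD N p q = fun x => pathCount hEpq.choose q x := dif_pos hEpq
  have hmqp : muD N q p = fun x => pathCount hEqp.choose p x := dif_pos hEqp
  have huvN : (u, v) ∉ N.dir := undir_not_dir hP huv
  have hvuN : (v, u) ∉ N.dir := by
    apply undir_not_dir hP
    rw [Sym2.eq_swap]; exact huv
  have hpqN : (p, q) ∉ N.dir := undir_not_dir hP hpq
  have hqpN : (q, p) ∉ N.dir := by
    apply undir_not_dir hP
    rw [Sym2.eq_swap]; exact hpq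
  -- well-definedness transfers
  have wd_uv : ∀ x, pathCount hEuv.choose v x = pathCount Bp v x := fun x =>
    pathCount_eq_of_shared hP hEuv.choose_spec.1 hBp hEuv.choose_spec.2 huvBp huvN x
  have wd_vu : ∀ x, pathCount hEvu.choose u x = pathCount Bm u x := fun x =>
    pathCount_eq_of_shared hP hEvu.choose_spec.1 hBm hEvu.choose_spec.2 hvuBm hvuN x
  have wd_pq : ∀ x, pathCount hEpq.choose q x = pathCount Bp q x := fun x =>
    pathCount_eq_of_shared hP hEpq.choose_spec.1 hBp hEpq.choose_spec.2 hpqBp hpqN x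
  have wd_qp : ∀ x, pathCount hEqp.choose p x = pathCount Bm p x := fun x =>
    pathCount_eq_of_shared hP hEqp.choose_spec.1 hBm hEqp.choose_spec.2 hqpBm hqpN x
  have emuv : ∀ x, muD N u v x = pathCount Bp v x := by
    intro x; rw [hmuv]; exact wd_uv x
  have emvu : ∀ x, muD N v u x = pathCount Bm u x := by
    intro x; rw [hmvu]; exact wd_vu x
  have empq : ∀ x, muD N p q x = pathCount Bp q x := by
    intro x; rw [hmpq]; exact wd_pq x
  have emqp : ∀ x, muD N q p x = pathCount Bm p x := by
    intro x; rw [hmqp]; exact wd_qp x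
  -- reachability facts along the chain
  have hvq : Bp.dreach v q := by
    have hh := dreach_of_fwd hfwd (l.length - 1) 1 (by omega) (by omega) (by omega)
    rwa [hKv (by omega), hKq (by omega)] at hh
  have hpu : Bm.dreach p u := by
    have hh := dreach_of_back hbackK (l.length - 2) 0 (by omega) (by omega) (by omega)
    rwa [hKp (by omega), hKu (by omega)] at hh
  -- tree path to a leaf from u in Bm
  obtain ⟨m1, x1, hm1h, hm1l, hm1c, hm1nd, hx1odeg⟩ := exists_tree_leaf hBm (hTC Bm hBm) u
  have hm1c' : m1.Chain' Bm.dstep := hm1c.imp (fun _ _ h => h.1)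
  have hux1 : Bm.dreach u x1 := chain_rtg m1 hm1c' hm1h hm1l
  have hx1leaf : IsUnrootedLeaf N x1 := ⟨Bm, hBm, hx1odeg⟩
  have hm1len : 0 < m1.length := by
    rcases m1 with - | ⟨c, t⟩
    · simp at hm1h
    · simp
  have hm1x : ∀ h : m1.length - 1 < m1.length, m1.get ⟨m1.length - 1, h⟩ = x1 :=
    fun h => getlast_of_getLast hm1l h
  -- tree nodes of m1 other than u are not in the chain
  have hm1K : ∀ j (hj : j < m1.length), 1 ≤ j → m1.get ⟨j, hj⟩ ∉ K := by
    intro j hj hj1 hmem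
    obtain ⟨⟨i', hi'⟩, hget⟩ := List.mem_iff_get.1 hmem
    have hreach : Bm.dreach u (m1.get ⟨j, hj⟩) := chain_head_dreach hm1c' hm1h j hj
    obtain ⟨j'', hj'', hge, hu2⟩ := dreach_pos_up hinG u _ hreach i' hi' hget.symm
    have h0 : (0:ℕ) = j'' := hKget_inj 0 j'' hK0 hj'' (by rw [hKu hK0, hu2])
    have hi0 : i' = 0 := by omega
    have hju : m1.get ⟨j, hj⟩ = m1.get ⟨0, by omega⟩ := by
      rw [get0_of_head hm1h, ← hget, ← hKu hK0]
      exact list_get_congr K _ _ hi0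
    have := List.nodup_iff_injective_get.1 hm1nd hju
    simp at this
    omega
  -- descent: no chain node above u reaches x1 in Bp
  have hdescBp : ∀ i' (hi' : i' < K.length), 1 ≤ i' →
      ¬ Bp.dreach (K.get ⟨i', hi'⟩) x1 := by
    intro i' hi' hge1 hreach
    have key : ∀ j (hj : j < m1.length), ¬ Bp.dreach (K.get ⟨i', hi'⟩) (m1.get ⟨j, hj⟩) := by
      intro j
      induction j with
      | zero =>
        intro hj hr
        rw [get0_of_head hm1h hj] at hr
        obtain ⟨j'', hj'', hle, hk⟩ := dreach_pos_down hinH _ u hr 0 hK0 (hKu hK0).symm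
        have := hKget_inj i' j'' hi' hj'' hk
        omega
      | succ n ihn =>
        intro hj hr
        rcases Relation.ReflTransGen.cases_tail hr with heq | ⟨c, hc1, hc2⟩
        · apply hm1K (n+1) hj (by omega)
          rw [heq]
          exact List.get_mem _ _
        · have hnK := hm1K (n+1) hj (by omega)
          have hBmEdge : (c, m1.get ⟨n+1, hj⟩) ∈ Bm.dir :=
            ((hout _ hnK (c, m1.get ⟨n+1, hj⟩)).1 ⟨hc2, rfl⟩).1
          have htre := List.isChain_iff_getElem.1 hm1c n (by omega)
          have hceq := in_edge_unique (G := Bm) (b := m1.get ⟨n+1, hj⟩)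
            htre.2 hBmEdge rfl htre.1 rfl
          have hcm : c = m1.get ⟨n, by omega⟩ := congrArg Prod.fst hceq
          exact ihn (by omega) (by rwa [hcm] at hc1)
    apply key (m1.length - 1) (by omega)
    rwa [hm1x (by omega)]
  -- tree path to a leaf from q in Bp
  obtain ⟨m2, x2, hm2h, hm2l, hm2c, hm2nd, hx2odeg⟩ := exists_tree_leaf hBp (hTC Bp hBp) q
  have hm2c' : m2.Chain' Bp.dstep := hm2c.imp (fun _ _ h => h.1)
  have hqx2 : Bp.dreach q x2 := chain_rtg m2 hm2c' hm2h hm2l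
  have hx2leaf : IsUnrootedLeaf N x2 := ⟨Bp, hBp, hx2odeg⟩
  have hm2len : 0 < m2.length := by
    rcases m2 with - | ⟨c, t⟩
    · simp at hm2h
    · simp
  have hm2x : ∀ h : m2.length - 1 < m2.length, m2.get ⟨m2.length - 1, h⟩ = x2 :=
    fun h => getlast_of_getLast hm2l h
  -- chain nodes on m2 have index at least (l.length - 1)
  have hm2K : ∀ j (hj : j < m2.length), ∀ i' (hi' : i' < K.length),
      m2.get ⟨j, hj⟩ = K.get ⟨i', hi'⟩ → l.length - 1 ≤ i' := by
    intro j hj i' hi' he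
    have hreach : Bp.dreach q (m2.get ⟨j, hj⟩) := chain_head_dreach hm2c' hm2h j hj
    obtain ⟨j'', hj'', hle, hq2⟩ := dreach_pos_down hinH q _ hreach i' hi' he
    have : l.length - 1 = j'' := by
      apply hKget_inj (l.length - 1) j'' (by omega) hj''
      rw [hKq (by omega), hq2]
    omega
  -- descent: no chain node strictly below q reaches x2 in Bm
  have hdescBm : ∀ i' (hi' : i' < K.length), i' < l.length - 1 →
      ¬ Bm.dreach (K.get ⟨i', hi'⟩) x2 := by
    intro i' hi' hlt hreach
    have key : ∀ j (hj : j < m2.length), ¬ Bm.dreach (K.get ⟨i', hi'⟩) (m2.get ⟨j, hj⟩) := by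
      intro j
      induction j with
      | zero =>
        intro hj hr
        have hq0 : m2.get ⟨0, hj⟩ = K.get ⟨l.length - 1, by omega⟩ := by
          rw [get0_of_head hm2h hj, ← hKq (by omega)]
        obtain ⟨j'', hj'', hge, hk⟩ := dreach_pos_up hinG _ _ hr (l.length - 1) (by omega) hq0
        have := hKget_inj i' j'' hi' hj'' hk
        omega
      | succ n ihn =>
        intro hj hr
        by_cases hmem : m2.get ⟨n+1, hj⟩ ∈ K
        · obtain ⟨⟨i2, hi2⟩, hget⟩ := List.mem_iff_get.1 hmem
          have hge := hm2K (n+1) hj i2 hi2 hget.symm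
          obtain ⟨j'', hj'', hge2, hk⟩ := dreach_pos_up hinG _ _ hr i2 hi2 hget.symm
          have := hKget_inj i' j'' hi' hj'' hk
          omega
        · rcases Relation.ReflTransGen.cases_tail hr with heq | ⟨c, hc1, hc2⟩
          · apply hmem
            rw [heq]
            exact List.get_mem _ _
          · have hBpEdge : (c, m2.get ⟨n+1, hj⟩) ∈ Bp.dir :=
              ((hout _ hmem (c, m2.get ⟨n+1, hj⟩)).2 ⟨hc2, rfl⟩).1
            have htre := List.isChain_iff_getElem.1 hm2c n (by omega)
            have hceq := in_edge_unique (G := Bp) (b := m2.get ⟨n+1, hj⟩)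
              htre.2 hBpEdge rfl htre.1 rfl
            have hcm : c = m2.get ⟨n, by omega⟩ := congrArg Prod.fst hceq
            exact ihn (by omega) (by rwa [hcm] at hc1)
    apply key (m2.length - 1) (by omega)
    rwa [hm2x (by omega)]
  -- the four strictness facts
  have count_vu_x1 : 0 < pathCount Bm u x1 := (pathCount_pos hnBm).2 hux1
  have count_pq_x2 : 0 < pathCount Bp q x2 := (pathCount_pos hnBp).2 hqx2
  have count_uv_x2 : 0 < pathCount Bp v x2 := (pathCount_pos hnBp).2 (hvq.trans hqx2)
  have count_qp_x1 : 0 < pathCount Bm p x1 := (pathCount_pos hnBm).2 (hpu.trans hux1)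
  have count_pq_x1 : pathCount Bp q x1 = 0 := by
    apply pathCount_eq_zero hnBp
    intro hr
    apply hdescBp (l.length - 1) (by omega) (by omega)
    rwa [hKq (by omega)]
  have count_uv_x1 : pathCount Bp v x1 = 0 := by
    apply pathCount_eq_zero hnBp
    intro hr
    apply hdescBp 1 (by omega) (by omega)
    rwa [hKv (by omega)]
  have count_vu_x2 : pathCount Bm u x2 = 0 := by
    apply pathCount_eq_zero hnBm
    intro hr
    apply hdescBm 0 hK0 (by omega)
    rwa [hKu hK0]
  have count_qp_x2 : pathCount Bm p x2 = 0 := by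
    apply pathCount_eq_zero hnBm
    intro hr
    apply hdescBm (l.length - 2) (by omega) (by omega)
    rwa [hKp (by omega)]
  refine ⟨?_, ⟨?_, ?_⟩, ⟨?_, ?_⟩⟩
  · -- muLE (muD p q) (muD u v)
    intro x hx
    rw [empq x, emuv x]
    exact pathCount_le_of_dreach hnBp hvq
  · -- ¬ muLE (muD v u) (muD p q)
    intro hle
    have hh := hle x1 hx1leaf
    rw [emvu x1, empq x1, count_pq_x1] at hh
    omega
  · -- ¬ muLE (muD p q) (muD v u)
    intro hle
    have hh := hle x2 hx2leaf
    rw [empq x2, emvu x2, count_vu_x2] at hh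
    omega
  · -- ¬ muLE (muD u v) (muD q p)
    intro hle
    have hh := hle x2 hx2leaf
    rw [emuv x2, emqp x2, count_qp_x2] at hh
    omega
  · -- ¬ muLE (muD q p) (muD u v)
    intro hle
    have hh := hle x1 hx1leaf
    rw [emqp x1, emuv x1, count_uv_x1] at hh
    omega

end Main

end SDG
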